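/- For n ≥ 2 and z ∈ ℂ with |z| ≠ 1, set a_n(z) = Σ_{k=0}^n |z|^{2k}, b_n(z) = z̄ Σ_{k=1}^n k |z|^{2k−2}, c_n(z) = Σ_{k=1}^n k² |z|^{2k−2}, and |Σ_n| = a_n c_n − |b_n|². Then |Σ_n|/a_n² = 1/(1−|z|²)² − (n+1)² |z|^{2n}/(1−|z|^{2n+2})². Moreover: for |z| < 1, |Σ_n|/a_n³ ≤ 1/(1−|z|²) and |Σ_n|/a_n³ → 1/(1−|z|²) as n → ∞; for |z| > 1, |Σ_n|/a_n³ ≤ 1/(|z|²−1) and |Σ_n|/a_n³ → 0 as n → ∞. -/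

import Mathlib

open Filter

/-- `a_n(z) = ∑_{k=0}^n |z|^{2k}` for the Kac covariance kernel. -/
noncomputable def kacA (n : ℕ) (z : ℂ) : ℝ :=
  ∑ k ∈ Finset.range (n + 1), ‖z‖ ^ (2 * k)

/-- The real sum `∑_{k=1}^n k |z|^{2k-2}`, so that `b_n = z̄ ⬝ kacBsum` and
`|b_n|² = |z|² ⬝ kacBsum²`. -/
noncomputable def kacBsum (n : ℕ) (z : ℂ) : ℝ :=
  ∑ k ∈ Finset.Icc 1 n, (k : ℝ) * ‖z‖ ^ (2 * k - 2)

/-- `c_n(z) = ∑_{k=1}^n k² |z|^{2k-2}` for the Kac kernel. -/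
noncomputable def kacC1 (n : ℕ) (z : ℂ) : ℝ :=
  ∑ k ∈ Finset.Icc 1 n, (k : ℝ) ^ 2 * ‖z‖ ^ (2 * k - 2)

/-- `|Σ_n| = a_n c_n - |b_n|²`, the determinant of the covariance matrix of
`(p_n(z), p_n'(z))` for the Kac random polynomial. -/
noncomputable def kacDet (n : ℕ) (z : ℂ) : ℝ :=
  kacA n z * kacC1 n z - ‖z‖ ^ 2 * kacBsum n z ^ 2

/-!
Write `r = ‖z‖²`. The sums `a_n`, `kacBsum`, `c_n` are the power sums `∑ rᵏ`, `∑ (k+1) rᵏ`,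
`∑ (k+1)² rᵏ`, and their closed forms collapse the determinant to
`|Σ_n| (1 - r)² = a_n² - (n+1)² rⁿ`, while `a_n (1 - r) = 1 - rⁿ⁺¹`; the formula for `|Σ_n| / a_n²`
is immediate. The bound `|Σ_n| / a_n³ ≤ 1 / |1 - r|` becomes `a_n² (1 - |1 - rⁿ⁺¹|) ≤ (n+1)² rⁿ`,
which follows from `a_n ≤ (n+1) max(1, rⁿ)`. For `r < 1`, `a_n → 1 / (1 - r)` and `(n+1)² rⁿ → 0`
give the limit. For `r > 1`, `|Σ_n| ≥ 0` (a Gram determinant, by Cauchy–Schwarz), `|Σ_n| / a_n²` is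
bounded and `a_n ≥ n + 1`, so `|Σ_n| / a_n³ = O(1/n)`.
-/

open Finset Topology

section PowerSums

variable {R : Type*} [CommRing R] (x : R) (n : ℕ)

theorem sum_range_add_one_mul_pow_mul_one_sub_sq :
    (∑ k ∈ range n, ((k : R) + 1) * x ^ k) * (1 - x) ^ 2 =
      1 - (n + 1) * x ^ n + n * x ^ (n + 1) := by
  induction n with
  | zero => simp
  | succ n ih =>
    rw [sum_range_succ]
    push_cast
    linear_combination ih

theorem sum_range_add_one_sq_mul_pow_mul_one_sub_cube :
    (∑ k ∈ range n, ((k : R) + 1) ^ 2 * x ^ k) * (1 - x) ^ 3 =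
      1 + x - (n + 1) ^ 2 * x ^ n + (2 * n ^ 2 + 2 * n - 1) * x ^ (n + 1)
        - n ^ 2 * x ^ (n + 2) := by
  induction n with
  | zero => simp
  | succ n ih =>
    rw [sum_range_succ]
    push_cast
    linear_combination ih

theorem geom_sum_gram_det_mul_one_sub_sq [IsDomain R] :
    ((∑ k ∈ range (n + 1), x ^ k) * (∑ k ∈ range n, ((k : R) + 1) ^ 2 * x ^ k)
        - x * (∑ k ∈ range n, ((k : R) + 1) * x ^ k) ^ 2) * (1 - x) ^ 2 =
      (∑ k ∈ range (n + 1), x ^ k) ^ 2 - (n + 1) ^ 2 * x ^ n := by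
  rcases eq_or_ne x 1 with rfl | hx
  · simp
  apply mul_right_cancel₀ (pow_ne_zero 2 (sub_ne_zero.2 hx.symm))
  set A := ∑ k ∈ range (n + 1), x ^ k
  set B := ∑ k ∈ range n, ((k : R) + 1) * x ^ k
  set C := ∑ k ∈ range n, ((k : R) + 1) ^ 2 * x ^ k
  have hA : A * (1 - x) = 1 - x ^ (n + 1) := geom_sum_mul_neg x (n + 1)
  have hB := sum_range_add_one_mul_pow_mul_one_sub_sq x n
  have hC := sum_range_add_one_sq_mul_pow_mul_one_sub_cube x n
  linear_combination C * (1 - x) ^ 3 * hA + (1 - x ^ (n + 1)) * hC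
    - x * (B * (1 - x) ^ 2 + (1 - (n + 1) * x ^ n + n * x ^ (n + 1))) * hB
    - (A * (1 - x) + 1 - x ^ (n + 1)) * hA

end PowerSums

section Kac

variable (n : ℕ) (z : ℂ)

theorem one_sub_norm_sq_ne_zero (hz : ‖z‖ ≠ 1) : 1 - ‖z‖ ^ 2 ≠ 0 :=
  sub_ne_zero.2 fun h => hz ((pow_eq_one_iff_of_nonneg (norm_nonneg z) two_ne_zero).1 h.symm)

theorem kacA_eq_geom_sum : kacA n z = ∑ k ∈ range (n + 1), (‖z‖ ^ 2) ^ k := by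
  simp only [kacA, pow_mul]

theorem sum_Icc_one_mul_norm_pow_two_mul_sub_two (f : ℕ → ℝ) :
    ∑ k ∈ Icc 1 n, f k * ‖z‖ ^ (2 * k - 2) = ∑ k ∈ range n, f (k + 1) * (‖z‖ ^ 2) ^ k := by
  rw [← Ico_add_one_right_eq_Icc, sum_Ico_eq_sum_range, add_tsub_cancel_right]
  refine sum_congr rfl fun k _ => ?_
  rw [add_comm 1 k, show 2 * (k + 1) - 2 = 2 * k by omega, pow_mul]

theorem kacBsum_eq : kacBsum n z = ∑ k ∈ range n, ((k : ℝ) + 1) * (‖z‖ ^ 2) ^ k := by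
  simp only [kacBsum, sum_Icc_one_mul_norm_pow_two_mul_sub_two, Nat.cast_add_one]

theorem kacC1_eq : kacC1 n z = ∑ k ∈ range n, ((k : ℝ) + 1) ^ 2 * (‖z‖ ^ 2) ^ k := by
  simp only [kacC1, sum_Icc_one_mul_norm_pow_two_mul_sub_two, Nat.cast_add_one]

theorem kacDet_mul_one_sub_sq :
    kacDet n z * (1 - ‖z‖ ^ 2) ^ 2 = kacA n z ^ 2 - (n + 1) ^ 2 * ‖z‖ ^ (2 * n) := by
  rw [kacDet, kacA_eq_geom_sum, kacBsum_eq, kacC1_eq, pow_mul]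
  exact geom_sum_gram_det_mul_one_sub_sq _ n

theorem kacA_mul_one_sub : kacA n z * (1 - ‖z‖ ^ 2) = 1 - ‖z‖ ^ (2 * n + 2) := by
  rw [kacA_eq_geom_sum, geom_sum_mul_neg, ← pow_mul]
  ring_nf

theorem kacDet_nonneg : 0 ≤ kacDet n z := by
  have h := sum_mul_sq_le_sq_mul_sq (range (n + 1)) (fun k => ‖z‖ ^ k)
    (fun k => (k : ℝ) * ‖z‖ ^ (k - 1))
  have hf : ∑ k ∈ range (n + 1), (‖z‖ ^ k) ^ 2 = kacA n z := by
    rw [kacA_eq_geom_sum]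
    exact sum_congr rfl fun k _ => by ring
  have hg : ∑ k ∈ range (n + 1), ((k : ℝ) * ‖z‖ ^ (k - 1)) ^ 2 = kacC1 n z := by
    rw [kacC1_eq, sum_range_succ', Nat.cast_zero, zero_mul, zero_pow two_ne_zero, add_zero]
    exact sum_congr rfl fun k _ => by rw [add_tsub_cancel_right]; push_cast; ring
  have hfg : ∑ k ∈ range (n + 1), ‖z‖ ^ k * ((k : ℝ) * ‖z‖ ^ (k - 1)) = ‖z‖ * kacBsum n z := by
    rw [kacBsum_eq, mul_sum, sum_range_succ', Nat.cast_zero, zero_mul, mul_zero, add_zero]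
    exact sum_congr rfl fun k _ => by rw [add_tsub_cancel_right]; push_cast; ring
  rw [hf, hg, hfg] at h
  rw [kacDet]
  linarith

theorem one_le_kacA : 1 ≤ kacA n z := by
  rw [kacA_eq_geom_sum]
  exact (pow_zero _).symm.trans_le
    (single_le_sum (fun k _ => by positivity) (mem_range.2 n.succ_pos))

theorem kacA_pos : 0 < kacA n z :=
  zero_lt_one.trans_le (one_le_kacA n z)

theorem kacA_le_of_norm_le_one (h : ‖z‖ ≤ 1) : kacA n z ≤ n + 1 := by
  calc kacA n z ≤ #(range (n + 1)) • (1 : ℝ) :=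
        sum_le_card_nsmul _ _ _ fun k _ => pow_le_one₀ (norm_nonneg z) h
    _ = n + 1 := by simp

theorem kacA_le_of_one_le_norm (h : 1 ≤ ‖z‖) : kacA n z ≤ (n + 1) * ‖z‖ ^ (2 * n) := by
  calc kacA n z ≤ #(range (n + 1)) • ‖z‖ ^ (2 * n) :=
        sum_le_card_nsmul _ _ _ fun k hk => pow_le_pow_right₀ h (by simp at hk; omega)
    _ = (n + 1) * ‖z‖ ^ (2 * n) := by simp

theorem le_kacA_of_one_le_norm (h : 1 ≤ ‖z‖) : n + 1 ≤ kacA n z := by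
  calc (n + 1 : ℝ) = #(range (n + 1)) • (1 : ℝ) := by simp
    _ ≤ kacA n z := card_nsmul_le_sum _ _ _ fun k _ => one_le_pow₀ h

theorem kacA_sq_mul_norm_pow_le_of_norm_le_one (h : ‖z‖ ≤ 1) :
    kacA n z ^ 2 * ‖z‖ ^ (2 * n + 2) ≤ (n + 1) ^ 2 * ‖z‖ ^ (2 * n) := by
  have hA := (kacA_pos n z).le
  calc kacA n z ^ 2 * ‖z‖ ^ (2 * n + 2) = kacA n z ^ 2 * ‖z‖ ^ 2 * ‖z‖ ^ (2 * n) := by ring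
    _ ≤ (n + 1) ^ 2 * 1 * ‖z‖ ^ (2 * n) := by
        gcongr
        · exact kacA_le_of_norm_le_one n z h
        · exact pow_le_one₀ (norm_nonneg z) h
    _ = (n + 1) ^ 2 * ‖z‖ ^ (2 * n) := by rw [mul_one]

theorem kacA_sq_mul_two_sub_le_of_one_le_norm (h : 1 ≤ ‖z‖) :
    kacA n z ^ 2 * (2 - ‖z‖ ^ (2 * n + 2)) ≤ (n + 1) ^ 2 * ‖z‖ ^ (2 * n) := by
  set t := ‖z‖ ^ (2 * n)
  have ht : 1 ≤ t := one_le_pow₀ h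
  rcases le_total (‖z‖ ^ (2 * n + 2)) 2 with hs | hs
  · have hts : t ≤ ‖z‖ ^ (2 * n + 2) := pow_le_pow_right₀ h (by omega)
    calc kacA n z ^ 2 * (2 - ‖z‖ ^ (2 * n + 2)) ≤ ((n + 1) * t) ^ 2 * (2 - t) := by
          gcongr
          · exact (kacA_pos n z).le
          · exact kacA_le_of_one_le_norm n z h
      _ = (n + 1) ^ 2 * t - (n + 1) ^ 2 * t * (t - 1) ^ 2 := by ring
      _ ≤ (n + 1) ^ 2 * t := sub_le_self _ (by positivity)
  · calc kacA n z ^ 2 * (2 - ‖z‖ ^ (2 * n + 2)) ≤ 0 :=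
          mul_nonpos_of_nonneg_of_nonpos (by positivity) (by linarith)
      _ ≤ (n + 1) ^ 2 * t := by positivity

theorem kacA_sq_mul_one_sub_abs_le :
    kacA n z ^ 2 * (1 - |1 - ‖z‖ ^ (2 * n + 2)|) ≤ (n + 1) ^ 2 * ‖z‖ ^ (2 * n) := by
  rcases le_total ‖z‖ 1 with h | h
  · rw [abs_of_nonneg (sub_nonneg.2 (pow_le_one₀ (norm_nonneg z) h)), sub_sub_cancel]
    exact kacA_sq_mul_norm_pow_le_of_norm_le_one n z h
  · rw [abs_of_nonpos (sub_nonpos.2 (one_le_pow₀ h)), sub_neg_eq_add, ← add_sub_assoc,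
      one_add_one_eq_two]
    exact kacA_sq_mul_two_sub_le_of_one_le_norm n z h

theorem kacDet_eq_div (hz : ‖z‖ ≠ 1) :
    kacDet n z = (kacA n z ^ 2 - (n + 1) ^ 2 * ‖z‖ ^ (2 * n)) / (1 - ‖z‖ ^ 2) ^ 2 :=
  eq_div_of_mul_eq (pow_ne_zero 2 (one_sub_norm_sq_ne_zero z hz)) (kacDet_mul_one_sub_sq n z)

theorem kacDet_div_kacA_sq (hz : ‖z‖ ≠ 1) :
    kacDet n z / kacA n z ^ 2 =
      1 / (1 - ‖z‖ ^ 2) ^ 2 - (n + 1) ^ 2 * ‖z‖ ^ (2 * n) / (1 - ‖z‖ ^ (2 * n + 2)) ^ 2 := by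
  have hA := (kacA_pos n z).ne'
  have hr := one_sub_norm_sq_ne_zero z hz
  rw [kacDet_eq_div n z hz, ← kacA_mul_one_sub]
  field_simp

theorem kacDet_div_kacA_cube_le (hz : ‖z‖ ≠ 1) : kacDet n z / kacA n z ^ 3 ≤ 1 / |1 - ‖z‖ ^ 2| := by
  have hA := kacA_pos n z
  have hr : 0 < |1 - ‖z‖ ^ 2| := abs_pos.2 (one_sub_norm_sq_ne_zero z hz)
  rw [div_le_div_iff₀ (by positivity) hr, one_mul]
  refine le_of_mul_le_mul_right ?_ hr
  calc kacDet n z * |1 - ‖z‖ ^ 2| * |1 - ‖z‖ ^ 2| = kacDet n z * (1 - ‖z‖ ^ 2) ^ 2 := by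
        rw [mul_assoc, abs_mul_abs_self, ← sq]
    _ = kacA n z ^ 2 - (n + 1) ^ 2 * ‖z‖ ^ (2 * n) := kacDet_mul_one_sub_sq n z
    _ ≤ kacA n z ^ 2 * |1 - ‖z‖ ^ (2 * n + 2)| := by linarith [kacA_sq_mul_one_sub_abs_le n z]
    _ = kacA n z ^ 3 * |1 - ‖z‖ ^ 2| := by
        rw [← kacA_mul_one_sub, abs_mul, abs_of_pos hA]
        ring

theorem tendsto_kacA_of_norm_lt_one (h : ‖z‖ < 1) :
    Tendsto (fun n => kacA n z) atTop (𝓝 (1 - ‖z‖ ^ 2)⁻¹) := by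
  simp only [kacA_eq_geom_sum]
  exact ((hasSum_geometric_of_lt_one (sq_nonneg _) (pow_lt_one₀ (norm_nonneg z) h two_ne_zero)
    ).tendsto_sum_nat).comp (tendsto_add_atTop_nat 1)

end Kac

theorem tendsto_add_one_sq_mul_pow {r : ℝ} (h : |r| < 1) :
    Tendsto (fun n : ℕ => ((n : ℝ) + 1) ^ 2 * r ^ n) atTop (𝓝 0) := by
  have hk k := tendsto_pow_const_mul_const_pow_of_abs_lt_one k h
  have := (hk 2).add (((hk 1).const_mul 2).add (hk 0))
  simp only [mul_zero, add_zero] at this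
  exact this.congr fun n => by ring

theorem tendsto_kacDet_div_kacA_cube_of_norm_lt_one {z : ℂ} (h : ‖z‖ < 1) :
    Tendsto (fun n => kacDet n z / kacA n z ^ 3) atTop (𝓝 (1 / (1 - ‖z‖ ^ 2))) := by
  have hr : 0 < 1 - ‖z‖ ^ 2 := sub_pos.2 (pow_lt_one₀ (norm_nonneg z) h two_ne_zero)
  have hA := tendsto_kacA_of_norm_lt_one z h
  have hT : Tendsto (fun n : ℕ => ((n : ℝ) + 1) ^ 2 * ‖z‖ ^ (2 * n)) atTop (𝓝 0) := by
    simpa only [pow_mul] using tendsto_add_one_sq_mul_pow (r := ‖z‖ ^ 2) (by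
      rw [abs_of_nonneg (sq_nonneg _)]; linarith)
  have := ((hA.pow 2).sub hT).div ((hA.pow 3).const_mul ((1 - ‖z‖ ^ 2) ^ 2)) (by positivity)
  convert this using 1
  · funext n
    rw [Pi.div_apply, kacDet_eq_div n z h.ne, div_div]
  · rw [sub_zero]
    field_simp

theorem tendsto_kacDet_div_kacA_cube_of_one_lt_norm {z : ℂ} (h : 1 < ‖z‖) :
    Tendsto (fun n => kacDet n z / kacA n z ^ 3) atTop (𝓝 0) := by
  have hbound (n : ℕ) :
      kacDet n z / kacA n z ^ 3 ≤ 1 / (1 - ‖z‖ ^ 2) ^ 2 * (1 / ((n : ℝ) + 1)) := by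
    have hA := kacA_pos n z
    have hdiv : kacDet n z / kacA n z ^ 2 ≤ 1 / (1 - ‖z‖ ^ 2) ^ 2 := by
      rw [kacDet_div_kacA_sq n z h.ne']
      have : 0 ≤ (n + 1) ^ 2 * ‖z‖ ^ (2 * n) / (1 - ‖z‖ ^ (2 * n + 2)) ^ 2 := by positivity
      linarith
    calc kacDet n z / kacA n z ^ 3 = kacDet n z / kacA n z ^ 2 * (1 / kacA n z) := by
          rw [pow_succ, div_mul_div_comm, mul_one]
      _ ≤ _ := by
          gcongr ?_ * ?_
          exact one_div_le_one_div_of_le (by positivity) (le_kacA_of_one_le_norm n z h.le)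
  refine squeeze_zero (fun n => div_nonneg (kacDet_nonneg n z) (pow_nonneg (kacA_pos n z).le 3))
    hbound ?_
  rw [← mul_zero (1 / (1 - ‖z‖ ^ 2) ^ 2)]
  exact tendsto_one_div_add_atTop_nhds_zero_nat.const_mul _

/-- For `n ≥ 2` and `|z| ≠ 1`:
`|Σ_n|/a_n² = 1/(1-|z|²)² - (n+1)² |z|^{2n}/(1-|z|^{2n+2})²`; moreover for `|z| < 1` one has
`|Σ_n|/a_n³ ≤ 1/(1-|z|²)` and `|Σ_n|/a_n³ → 1/(1-|z|²)`, while for `|z| > 1` one has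
`|Σ_n|/a_n³ ≤ 1/(|z|²-1)` and `|Σ_n|/a_n³ → 0`. -/
theorem kac_det_over_a_properties (z : ℂ) (hz : ‖z‖ ≠ 1) :
    (∀ n : ℕ, 2 ≤ n → kacDet n z / kacA n z ^ 2 =
        1 / (1 - ‖z‖ ^ 2) ^ 2
          - (n + 1) ^ 2 * ‖z‖ ^ (2 * n) /
              (1 - ‖z‖ ^ (2 * n + 2)) ^ 2) ∧
    (‖z‖ < 1 →
      (∀ n : ℕ, 2 ≤ n →
          kacDet n z / kacA n z ^ 3 ≤ 1 / (1 - ‖z‖ ^ 2)) ∧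
      Tendsto (fun n : ℕ => kacDet n z / kacA n z ^ 3) atTop
        (nhds (1 / (1 - ‖z‖ ^ 2)))) ∧
    (1 < ‖z‖ →
      (∀ n : ℕ, 2 ≤ n →
          kacDet n z / kacA n z ^ 3 ≤ 1 / (‖z‖ ^ 2 - 1)) ∧
      Tendsto (fun n : ℕ => kacDet n z / kacA n z ^ 3) atTop (nhds 0)) := by
  refine ⟨fun n _ => kacDet_div_kacA_sq n z hz,
    fun h => ⟨fun n _ => ?_, tendsto_kacDet_div_kacA_cube_of_norm_lt_one h⟩,
    fun h => ⟨fun n _ => ?_, tendsto_kacDet_div_kacA_cube_of_one_lt_norm h⟩⟩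
  · have hr : 0 < 1 - ‖z‖ ^ 2 := sub_pos.2 (pow_lt_one₀ (norm_nonneg z) h two_ne_zero)
    simpa only [abs_of_pos hr] using kacDet_div_kacA_cube_le n z hz
  · have hr : 1 - ‖z‖ ^ 2 < 0 := sub_neg.2 (one_lt_pow₀ h two_ne_zero)
    simpa only [abs_of_neg hr, neg_sub] using kacDet_div_kacA_cube_le n z hz
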